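/- Let T be a bounded linear operator on a complex Hilbert space H, and let P, Q be nonzero orthogonal projections on H (bounded self-adjoint idempotents) with ‖P − Q‖ < 1. Let T_P denote the compression of T to the range of P (the operator x ↦ P(Tx) on ran P) and T_Q the compression of T to the range of Q. Then 𝔡(cl W(T_P), cl W(T_Q)) ≤ ‖T‖·‖P − Q‖·(1 + 2/(1 − ‖P − Q‖)²). -/

import Mathlib

open Metric

/-- The numerical range of the compression of `T` to the range of a projection `P`,
i.e. of the operator `x ↦ P (T x)` on `ran P`:
`W(T_P) = {⟨P T x, x⟩ : x ∈ ran P, ‖x‖ = 1}` (written with Mathlib's inner product,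
which is linear in the second variable). -/
def compressionNumericalRange {H : Type*} [NormedAddCommGroup H] [InnerProductSpace ℂ H]
    (P T : H →L[ℂ] H) : Set ℂ :=
  {z | ∃ x : H, x ∈ LinearMap.range (P : H →ₗ[ℂ] H) ∧ ‖x‖ = 1 ∧ (inner ℂ x (P (T x)) : ℂ) = z}

/-! For a unit vector `x ∈ ran P`, the vector `y = Qx / ‖Qx‖` is a unit vector of `ran Q`.
With `δ = ‖P - Q‖` we have `‖x - Qx‖ = ‖(P - Q)x‖ ≤ δ < 1`, so `Qx ≠ 0`, and Pythagoras
`1 = ‖Qx‖² + ‖x - Qx‖²` gives `1 - ‖Qx‖ ≤ δ²`, hence `‖x - y‖ ≤ δ + δ²`. As `x ↦ ⟪x, Tx⟫` is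
`2‖T‖`-Lipschitz on the unit ball, every point of one numerical range lies within
`2‖T‖(δ + δ²) ≤ ‖T‖δ(1 + 2/(1 - δ)²)` of the other, and symmetrically. -/

open scoped InnerProductSpace

section

variable {𝕜 E : Type*} [RCLike 𝕜] [NormedAddCommGroup E] [InnerProductSpace 𝕜 E]

theorem ContinuousLinearMap.norm_inner_apply_self_sub_le (T : E →L[𝕜] E) {x y : E}
    (hx : ‖x‖ ≤ 1) (hy : ‖y‖ ≤ 1) :
    ‖⟪x, T x⟫_𝕜 - ⟪y, T y⟫_𝕜‖ ≤ 2 * ‖T‖ * ‖x - y‖ := by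
  have hsplit : ⟪x, T x⟫_𝕜 - ⟪y, T y⟫_𝕜 = ⟪x - y, T x⟫_𝕜 + ⟪y, T (x - y)⟫_𝕜 := by
    simp only [inner_sub_left, inner_sub_right, map_sub]
    ring
  calc ‖⟪x, T x⟫_𝕜 - ⟪y, T y⟫_𝕜‖
      ≤ ‖x - y‖ * ‖T x‖ + ‖y‖ * ‖T (x - y)‖ := by
        rw [hsplit]
        exact (norm_add_le _ _).trans (add_le_add (norm_inner_le_norm _ _) (norm_inner_le_norm _ _))
    _ ≤ ‖x - y‖ * (‖T‖ * 1) + 1 * (‖T‖ * ‖x - y‖) := by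
        gcongr
        · exact T.le_opNorm_of_le hx
        · exact T.le_opNorm _
    _ = 2 * ‖T‖ * ‖x - y‖ := by ring

variable [CompleteSpace E] {Q : E →L[𝕜] E}

theorem IsStarProjection.apply_eq_self_of_mem_range (hQ : IsStarProjection Q) {x : E}
    (hx : x ∈ LinearMap.range (Q : E →ₗ[𝕜] E)) : Q x = x := by
  obtain ⟨u, rfl⟩ := hx
  exact congr($(hQ.isIdempotentElem) u)

theorem IsStarProjection.inner_apply_right_of_mem_range (hQ : IsStarProjection Q) {x : E}
    (hx : x ∈ LinearMap.range (Q : E →ₗ[𝕜] E)) (v : E) : ⟪x, Q v⟫_𝕜 = ⟪x, v⟫_𝕜 := by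
  calc ⟪x, Q v⟫_𝕜 = ⟪Q x, v⟫_𝕜 := (hQ.isSelfAdjoint.isSymmetric x v).symm
    _ = ⟪x, v⟫_𝕜 := by rw [hQ.apply_eq_self_of_mem_range hx]

theorem IsStarProjection.norm_sq_eq_norm_apply_sq_add_norm_sub_apply_sq
    (hQ : IsStarProjection Q) (x : E) : ‖x‖ ^ 2 = ‖Q x‖ ^ 2 + ‖x - Q x‖ ^ 2 := by
  have horth : ⟪Q x, x - Q x⟫_𝕜 = 0 := by
    have hQx : Q x ∈ LinearMap.range (Q : E →ₗ[𝕜] E) := LinearMap.mem_range_self _ x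
    rw [inner_sub_right, ← hQ.inner_apply_right_of_mem_range hQx x, sub_self]
  have := norm_add_sq_eq_norm_sq_add_norm_sq_of_inner_eq_zero (Q x) (x - Q x) horth
  rw [add_sub_cancel] at this
  simpa only [sq] using this

theorem IsStarProjection.norm_sub_inv_norm_smul_apply_le (hQ : IsStarProjection Q) {x : E}
    (hx : ‖x‖ = 1) : ‖x - (‖Q x‖⁻¹ : 𝕜) • Q x‖ ≤ ‖x - Q x‖ + ‖x - Q x‖ ^ 2 := by
  set c := ‖Q x‖
  have hpyth : 1 = c ^ 2 + ‖x - Q x‖ ^ 2 := by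
    simpa only [hx, one_pow] using hQ.norm_sq_eq_norm_apply_sq_add_norm_sub_apply_sq x
  have hc0 : 0 ≤ c := norm_nonneg _
  have hc1 : c ≤ 1 := by nlinarith
  have hrescale : ‖Q x - (c⁻¹ : 𝕜) • Q x‖ ≤ 1 - c := by
    rcases hc0.eq_or_lt with hc0 | hc0
    · rw [← hc0, RCLike.ofReal_zero, inv_zero, zero_smul, sub_zero, sub_zero]
      exact hc1
    have hinv : 1 ≤ c⁻¹ := (one_le_inv₀ hc0).mpr hc1
    refine le_of_eq ?_
    calc ‖Q x - (c⁻¹ : 𝕜) • Q x‖ = ‖((1 - c⁻¹ : ℝ) : 𝕜) • Q x‖ := by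
          rw [RCLike.ofReal_sub, RCLike.ofReal_one, RCLike.ofReal_inv, sub_smul, one_smul]
      _ = (c⁻¹ - 1) * c := by
          rw [norm_smul, RCLike.norm_ofReal, abs_of_nonpos (by linarith), neg_sub]
      _ = 1 - c := by rw [sub_mul, inv_mul_cancel₀ hc0.ne', one_mul]
  calc ‖x - (c⁻¹ : 𝕜) • Q x‖ ≤ ‖x - Q x‖ + ‖Q x - (c⁻¹ : 𝕜) • Q x‖ :=
        norm_sub_le_norm_sub_add_norm_sub _ _ _
    _ ≤ ‖x - Q x‖ + ‖x - Q x‖ ^ 2 := by nlinarith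

end

theorem exists_dist_le_of_mem_compressionNumericalRange {H : Type*} [NormedAddCommGroup H]
    [InnerProductSpace ℂ H] [CompleteSpace H] (T : H →L[ℂ] H) {P Q : H →L[ℂ] H}
    (hP : IsStarProjection P) (hQ : IsStarProjection Q) (hPQ : ‖P - Q‖ < 1) {z : ℂ}
    (hz : z ∈ compressionNumericalRange P T) :
    ∃ w ∈ compressionNumericalRange Q T, dist z w ≤ 2 * ‖T‖ * (‖P - Q‖ + ‖P - Q‖ ^ 2) := by
  obtain ⟨x, hxP, hx1, rfl⟩ := hz
  have hdev : ‖x - Q x‖ ≤ ‖P - Q‖ := by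
    calc ‖x - Q x‖ = ‖(P - Q) x‖ := by
          rw [sub_apply, hP.apply_eq_self_of_mem_range hxP]
      _ ≤ ‖P - Q‖ := (P - Q).unit_le_opNorm x hx1.le
  have hQx : Q x ≠ 0 := by
    intro h
    rw [h, sub_zero, hx1] at hdev
    linarith
  set y := (‖Q x‖⁻¹ : ℂ) • Q x with hy
  have hyQ : y ∈ LinearMap.range (Q : H →ₗ[ℂ] H) := ⟨(‖Q x‖⁻¹ : ℂ) • x, by simp [hy]⟩
  have hy1 : ‖y‖ = 1 := norm_smul_inv_norm hQx
  refine ⟨_, ⟨y, hyQ, hy1, rfl⟩, ?_⟩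
  rw [dist_eq_norm, hP.inner_apply_right_of_mem_range hxP, hQ.inner_apply_right_of_mem_range hyQ]
  calc ‖inner ℂ x (T x) - inner ℂ y (T y)‖ ≤ 2 * ‖T‖ * ‖x - y‖ :=
        T.norm_inner_apply_self_sub_le hx1.le hy1.le
    _ ≤ 2 * ‖T‖ * (‖x - Q x‖ + ‖x - Q x‖ ^ 2) := by
        gcongr
        exact hQ.norm_sub_inv_norm_smul_apply_le hx1
    _ ≤ 2 * ‖T‖ * (‖P - Q‖ + ‖P - Q‖ ^ 2) := by gcongr

theorem hausdorffDist_compression_numericalRange_le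
    {H : Type*} [NormedAddCommGroup H] [InnerProductSpace ℂ H] [CompleteSpace H]
    (T P Q : H →L[ℂ] H)
    (hP : IsSelfAdjoint P) (hP2 : IsIdempotentElem P)
    (hQ : IsSelfAdjoint Q) (hQ2 : IsIdempotentElem Q)
    (hPQ : ‖P - Q‖ < 1) :
    hausdorffDist (closure (compressionNumericalRange P T))
        (closure (compressionNumericalRange Q T)) ≤
      ‖T‖ * ‖P - Q‖ * (1 + 2 / (1 - ‖P - Q‖) ^ 2) := by
  set δ := ‖P - Q‖
  have hδ0 : 0 ≤ δ := norm_nonneg _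
  have hbound : 2 * ‖T‖ * (δ + δ ^ 2) ≤ ‖T‖ * δ * (1 + 2 / (1 - δ) ^ 2) := by
    have h : 2 * (1 + δ) ≤ 1 + 2 / (1 - δ) ^ 2 := by
      -- `(1 + 2δ)(1 - δ)² = 1 - 3δ² + 2δ³ ≤ 1`
      rw [← sub_le_iff_le_add', le_div_iff₀ (by nlinarith)]
      nlinarith
    nlinarith [mul_nonneg (norm_nonneg T) hδ0]
  rw [hausdorffDist_closure]
  refine hausdorffDist_le_of_mem_dist (by positivity) (fun z hz => ?_) (fun z hz => ?_)
  · obtain ⟨w, hw, hzw⟩ :=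
      exists_dist_le_of_mem_compressionNumericalRange T ⟨hP2, hP⟩ ⟨hQ2, hQ⟩ hPQ hz
    exact ⟨w, hw, hzw.trans hbound⟩
  · obtain ⟨w, hw, hzw⟩ := exists_dist_le_of_mem_compressionNumericalRange T
      ⟨hQ2, hQ⟩ ⟨hP2, hP⟩ (norm_sub_rev Q P ▸ hPQ) hz
    rw [norm_sub_rev Q P] at hzw
    exact ⟨w, hw, hzw.trans hbound⟩
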